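/- arXiv:2108.13217 — 5 statements merged into one kernel-verified Lean document; each statement's English description precedes it below -/
import Mathlib

section
/- In a preordered semiring S of polynomial growth with power universal element u, if x is catalytically larger than y (i.e., there exists a ∈ S with a·x ≽ a·y), then x is asymptotically larger than y; in fact there exists a fixed k ∈ ℕ such that u^k · x ≽ y. -/
/-! A catalyst `a ≠ 0` is sandwiched by powers of `u`: `1 ≤ u ^ k * a` and `a ≤ u ^ k`. Multiplying
`a * y ^ n ≤ a * x ^ n` by `u ^ k` and then replacing `a` by `u ^ k` on the right gives
`y ^ n ≤ u ^ (2 * k) * x ^ n` for every `n`, with `k` independent of `n`. -/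

section Catalyst

variable {M : Type*} [CommMonoid M] [Preorder M] [MulLeftMono M]

theorem mul_pow_le_mul_pow_of_mul_le_mul {a x y : M} (h : a * y ≤ a * x) (n : ℕ) :
    a * y ^ n ≤ a * x ^ n := by
  induction n with
  | zero => simp
  | succ n ih =>
    calc a * y ^ (n + 1) = y * (a * y ^ n) := by rw [pow_succ]; ac_rfl
      _ ≤ y * (a * x ^ n) := mul_le_mul_right ih y
      _ = x ^ n * (a * y) := by ac_rfl
      _ ≤ x ^ n * (a * x) := mul_le_mul_right h _
      _ = a * x ^ (n + 1) := by rw [pow_succ]; ac_rfl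

theorem le_pow_mul_of_mul_le_mul {u a x y : M} {k : ℕ} (hau : a ≤ u ^ k) (hua : 1 ≤ u ^ k * a)
    (h : a * y ≤ a * x) : y ≤ u ^ (2 * k) * x :=
  calc y = 1 * y := (one_mul y).symm
    _ ≤ u ^ k * a * y := mul_le_mul_left hua y
    _ = u ^ k * (a * y) := mul_assoc _ _ _
    _ ≤ u ^ k * (a * x) := mul_le_mul_right h _
    _ = (u ^ k * x) * a := by ac_rfl
    _ ≤ (u ^ k * x) * u ^ k := mul_le_mul_right hau _
    _ = u ^ (2 * k) * x := by rw [two_mul, pow_add]; ac_rfl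

end Catalyst

theorem catalytic_implies_asymptotic_general
    {S : Type*} [CommSemiring S] [Preorder S]
    (hmul : ∀ x y z : S, x ≤ y → x * z ≤ y * z)
    (u : S)
    (hupu : ∀ x : S, x ≠ 0 → ∃ k : ℕ, x ≤ u ^ k ∧ 1 ≤ u ^ k * x)
    (x y a : S) (ha : a ≠ 0) (hcat : a * y ≤ a * x) :
    (∃ k : ℕ, ∀ n : ℕ, y ^ n ≤ u ^ k * x ^ n) ∧
      ∃ k : ℕ → ℕ,
        Filter.Tendsto (fun n => (k n : ℝ) / n) Filter.atTop (nhds 0) ∧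
        ∀ n : ℕ, y ^ n ≤ u ^ (k n) * x ^ n := by
  have : MulLeftMono S := ⟨fun z x y h => by simpa only [mul_comm z] using hmul x y z h⟩
  obtain ⟨k, hau, hua⟩ := hupu a ha
  have bound (n : ℕ) : y ^ n ≤ u ^ (2 * k) * x ^ n :=
    le_pow_mul_of_mul_le_mul hau hua (mul_pow_le_mul_pow_of_mul_le_mul hcat n)
  refine ⟨⟨2 * k, bound⟩, fun _ => 2 * k, ?_, bound⟩
  simpa using tendsto_const_div_atTop_nhds_zero_nat (2 * k : ℝ)

/-- **Catalytic order implies asymptotic order, with a fixed power.**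
In a preordered semiring `S` of polynomial growth with power universal element `u`
(i.e. `1 ≤ u` and for every nonzero `x` there is `k` with `x ≤ u ^ k` and `1 ≤ u ^ k * x`),
if `x` is catalytically larger than `y`, witnessed by a nonzero catalyst `a` with
`a * y ≤ a * x`, then there is a fixed `k ∈ ℕ` such that `y ^ n ≤ u ^ k * x ^ n` for all `n`;
in particular (taking `n = 1`) `y ≤ u ^ k * x`, and `x` is asymptotically larger than `y`
(the constant sequence `k_n = k` satisfies `k_n / n → 0`). -/
theorem catalytic_implies_asymptotic
    {S : Type*} [CommSemiring S] [Preorder S]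
    (hadd : ∀ x y z : S, x ≤ y → x + z ≤ y + z)
    (hmul : ∀ x y z : S, x ≤ y → x * z ≤ y * z)
    (u : S) (hu1 : 1 ≤ u)
    (hupu : ∀ x : S, x ≠ 0 → ∃ k : ℕ, x ≤ u ^ k ∧ 1 ≤ u ^ k * x)
    (x y a : S) (ha : a ≠ 0) (hcat : a * y ≤ a * x) :
    (∃ k : ℕ, ∀ n : ℕ, y ^ n ≤ u ^ k * x ^ n) ∧
      ∃ k : ℕ → ℕ,
        Filter.Tendsto (fun n => (k n : ℝ) / n) Filter.atTop (nhds 0) ∧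
        ∀ n : ℕ, y ^ n ≤ u ^ (k n) * x ^ n :=
  catalytic_implies_asymptotic_general hmul u hupu x y a ha hcat
end

section
/- Let S be a preordered semiring of polynomial growth with power universal element u. Then for every monotone semiring homomorphism f from S into the nonnegative reals (or into the tropical semiring) and every nonzero x ∈ S, we have f(x) > 0. -/
theorem map_ne_zero_of_one_le_mul {S : Type*} [MulOneClass S] [Preorder S]
    {f : S → ℝ} (hf1 : f 1 = 1) (hf_mul : ∀ x y : S, f (x * y) = f x * f y)
    (hf_mono : ∀ x y : S, x ≤ y → f x ≤ f y) {x y : S} (h : 1 ≤ y * x) : f x ≠ 0 := by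
  intro hx
  have := hf_mono _ _ h
  rw [hf1, hf_mul, hx, mul_zero] at this
  norm_num at this

theorem spectral_point_positive_general
    {S : Type*} [CommSemiring S] [Preorder S]
    (u : S)
    (hupu : ∀ x : S, x ≠ 0 → ∃ k : ℕ, x ≤ u ^ k ∧ 1 ≤ u ^ k * x)
    (f : S → ℝ)
    (hf_nonneg : ∀ x : S, 0 ≤ f x)
    (hf1 : f 1 = 1)
    (hf_mul : ∀ x y : S, f (x * y) = f x * f y)
    (hf_mono : ∀ x y : S, x ≤ y → f x ≤ f y)
    (x : S) (hx : x ≠ 0) :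
    0 < f x := by
  obtain ⟨k, -, hk⟩ := hupu x hx
  exact (hf_nonneg x).lt_of_ne'
    (map_ne_zero_of_one_le_mul hf1 hf_mul hf_mono hk)

/-- **Monotone homomorphisms are strictly positive on nonzero elements.**
Let `S` be a preordered semiring of polynomial growth with power universal element `u`.
Every monotone semiring homomorphism `f` from `S` into the nonnegative reals — either a
genuine homomorphism (additive) or a homomorphism into the tropical semiring
(`max`-additive), both with the usual multiplication and order — satisfies `f x > 0`
for every nonzero `x ∈ S`. -/
theorem spectral_point_positive
    {S : Type*} [CommSemiring S] [Preorder S]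
    (hadd : ∀ x y z : S, x ≤ y → x + z ≤ y + z)
    (hmul : ∀ x y z : S, x ≤ y → x * z ≤ y * z)
    (u : S) (hu1 : 1 ≤ u)
    (hupu : ∀ x : S, x ≠ 0 → ∃ k : ℕ, x ≤ u ^ k ∧ 1 ≤ u ^ k * x)
    (f : S → ℝ)
    (hf_nonneg : ∀ x : S, 0 ≤ f x)
    (hf0 : f 0 = 0) (hf1 : f 1 = 1)
    (hf_mul : ∀ x y : S, f (x * y) = f x * f y)
    (hf_add : (∀ x y : S, f (x + y) = f x + f y) ∨ (∀ x y : S, f (x + y) = max (f x) (f y)))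
    (hf_mono : ∀ x y : S, x ≤ y → f x ≤ f y)
    (x : S) (hx : x ≠ 0) :
    0 < f x :=
  spectral_point_positive_general u hupu f hf_nonneg hf1 hf_mul hf_mono x hx
end

section
/- In the semiring of pairs of families of positive definite operators over compact spaces X and Y under relative submajorization, the element u = (2·1_X, 1_Y) (the pair of constant scalar families 2 and 1 on ℂ) is power universal: u ≽ 1, and for every nonzero pair (ρ,σ) there exists k ∈ ℕ with (ρ,σ) ≼ u^k and 1 ≼ u^k·(ρ,σ). -/
open Matrix Kronecker ComplexOrder

variable {n m : Type*}

/-- Loewner order: `loewner A B` means `A ≤ B`. -/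
def loewner [Fintype n] (A B : Matrix n n ℂ) : Prop := (B - A).PosSemidef

/-- The map `Φ ⊗ id_k` on block matrices. -/
def blockMap [Fintype n] [Fintype m] (Φ : Matrix n n ℂ →ₗ[ℂ] Matrix m m ℂ) (k : ℕ)
    (A : Matrix (n × Fin k) (n × Fin k) ℂ) : Matrix (m × Fin k) (m × Fin k) ℂ :=
  Matrix.of fun p q => Φ (Matrix.of fun a b => A (a, p.2) (b, q.2)) p.1 q.1

/-- Complete positivity of a linear map between matrix algebras. -/
def IsCP [Fintype n] [Fintype m] (Φ : Matrix n n ℂ →ₗ[ℂ] Matrix m m ℂ) : Prop :=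
  ∀ (k : ℕ) (A : Matrix (n × Fin k) (n × Fin k) ℂ), A.PosSemidef → (blockMap Φ k A).PosSemidef

/-- Trace nonincreasing on positive semidefinite operators. -/
def IsTNI [Fintype n] [Fintype m] (Φ : Matrix n n ℂ →ₗ[ℂ] Matrix m m ℂ) : Prop :=
  ∀ A : Matrix n n ℂ, A.PosSemidef → ((Φ A).trace).re ≤ (A.trace).re

/-!
By compactness the families are uniformly bounded in the Loewner order, `m ≤ ρ x, σ y ≤ M` with
`m > 0`: the upper bound comes from the (continuous) operator norm, the lower one from the norm of
the (continuous) inverse, since inversion is antitone on positive definite matrices. Every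
witness is a replacement map `A ↦ tr A • b` for a scalar `0 < b`; such a map is completely
positive, trace-nonincreasing when `b ⋅ dim ≤ 1`, and monotone, so each required inequality
reduces to a scalar inequality that holds once `2 ^ k` is large.
-/

open scoped MatrixOrder

lemma loewner_iff_le [Fintype n] {A B : Matrix n n ℂ} : loewner A B ↔ A ≤ B := Iff.rfl

namespace Matrix

def partialTrace [Fintype n] {k : Type*} (A : Matrix (n × k) (n × k) ℂ) : Matrix k k ℂ :=
  ∑ a : n, A.submatrix (fun i => (a, i)) (fun j => (a, j))

lemma PosSemidef.partialTrace [Fintype n] {k : Type*} {A : Matrix (n × k) (n × k) ℂ}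
    (hA : A.PosSemidef) : A.partialTrace.PosSemidef :=
  Finset.sum_induction _ PosSemidef (fun _ _ => .add) .zero fun _ _ => hA.submatrix _

end Matrix

def replacementMap [Fintype n] (B : Matrix m m ℂ) : Matrix n n ℂ →ₗ[ℂ] Matrix m m ℂ :=
  (traceLinearMap n ℂ ℂ).smulRight B

@[simp]
lemma replacementMap_apply [Fintype n] (B : Matrix m m ℂ) (A : Matrix n n ℂ) :
    replacementMap B A = A.trace • B := rfl

lemma blockMap_replacementMap [Fintype n] [Fintype m] (B : Matrix m m ℂ) (k : ℕ)
    (A : Matrix (n × Fin k) (n × Fin k) ℂ) :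
    blockMap (replacementMap B) k A = B ⊗ₖ A.partialTrace := by
  ext ⟨a, i⟩ ⟨b, j⟩
  simp [blockMap, partialTrace, kroneckerMap_apply, Matrix.trace, Matrix.sum_apply, mul_comm]

lemma isCP_replacementMap [Fintype n] [Fintype m] {B : Matrix m m ℂ} (hB : B.PosSemidef) :
    IsCP (replacementMap (n := n) B) := fun k A hA => by
  rw [blockMap_replacementMap]
  exact hB.kronecker hA.partialTrace

lemma isTNI_replacementMap [Fintype n] [Fintype m] {B : Matrix m m ℂ} (hB : B.trace ≤ 1) :
    IsTNI (replacementMap (n := n) B) := fun A hA => by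
  rw [replacementMap_apply, trace_smul, smul_eq_mul]
  exact (Complex.le_def.1 (mul_le_of_le_one_right hA.trace_nonneg hB)).1

lemma replacementMap_mono [Fintype n] {B : Matrix m m ℂ} (hB : B.PosSemidef) :
    Monotone (replacementMap (n := n) B) := fun A A' h => by
  rw [le_iff, ← map_sub, replacementMap_apply]
  exact hB.smul (nonneg_iff_posSemidef.1 (sub_nonneg.2 h)).trace_nonneg

lemma replacementMap_algebraMap [Fintype n] [DecidableEq n] [Fintype m] [DecidableEq m]
    (b r : ℝ) :
    replacementMap (n := n) (algebraMap ℝ (Matrix m m ℂ) b) (algebraMap ℝ _ r) =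
      algebraMap ℝ _ (r * Fintype.card n * b) := by
  simp [Algebra.algebraMap_eq_smul_one, ← Complex.coe_smul, smul_smul, mul_assoc]

lemma trace_algebraMap [Fintype n] [DecidableEq n] (r : ℝ) :
    (algebraMap ℝ (Matrix n n ℂ) r).trace = (r * Fintype.card n : ℝ) := by
  simp [Algebra.algebraMap_eq_smul_one]

lemma two_pow_smul_algebraMap [Fintype n] [DecidableEq n] (k : ℕ) (r : ℝ) :
    (2 : ℂ) ^ k • algebraMap ℝ (Matrix n n ℂ) r = algebraMap ℝ _ (2 ^ k * r) := by
  rw [show (2 : ℂ) ^ k = ((2 ^ k : ℝ) : ℂ) by push_cast; rfl, Complex.coe_smul, Algebra.smul_def,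
    map_mul]

section LoewnerBounds

open scoped Matrix.Norms.L2Operator

variable [Fintype n] [DecidableEq n] {Z : Type*} [TopologicalSpace Z] [CompactSpace Z]
  {τ : Z → Matrix n n ℂ}

lemma exists_forall_le_algebraMap (hτ : Continuous τ) (hτh : ∀ z, (τ z).IsHermitian) :
    ∃ M : ℝ, ∀ z, τ z ≤ algebraMap ℝ _ M := by
  obtain ⟨M, hM⟩ := (isCompact_range (continuous_norm.comp hτ)).bddAbove
  exact ⟨M, fun z => (hτh z).isSelfAdjoint.le_algebraMap_norm_self.trans
    (algebraMap_mono _ (hM ⟨z, rfl⟩))⟩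

lemma exists_pos_algebraMap_le (hτ : Continuous τ) (hτp : ∀ z, (τ z).PosDef) :
    ∃ m > 0, ∀ z, algebraMap ℝ _ m ≤ τ z := by
  have hinv : Continuous fun z => (τ z)⁻¹ :=
    continuous_iff_continuousAt.2 fun z => (continuousAt_matrix_inv _
      (NormedRing.inverse_continuousAt (Units.mk0 _ (hτp z).det_pos.ne'))).comp hτ.continuousAt
  obtain ⟨M, hM⟩ := exists_forall_le_algebraMap hinv fun z => (hτp z).inv.isHermitian
  refine ⟨(max M 1)⁻¹, by positivity, fun z => ?_⟩
  have h := CStarAlgebra.ringInverse_le_ringInverse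
    ((hM z).trans (algebraMap_mono _ (le_max_left M 1))) (hτp z).inv.isStrictlyPositive
  rwa [← nonsing_inv_eq_ringInverse, ← nonsing_inv_eq_ringInverse,
    nonsing_inv_nonsing_inv _ ((hτp z).isUnit.map detMonoidHom),
    inv_eq_left_inv (by rw [← map_mul, inv_mul_cancel₀ (by positivity), map_one])] at h

end LoewnerBounds

lemma exists_le_two_pow_of_loewner_bounds {X Y : Type*} [Fintype n] [DecidableEq n]
    [Nonempty n] (ρ : X → Matrix n n ℂ) (σ : Y → Matrix n n ℂ) {M m : ℝ} (hm : 0 < m)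
    (hρ : ∀ x, ρ x ≤ algebraMap ℝ _ M) (hσ : ∀ y, algebraMap ℝ _ m ≤ σ y) :
    ∃ k : ℕ, ∃ T : Matrix (Fin 1) (Fin 1) ℂ →ₗ[ℂ] Matrix n n ℂ, IsCP T ∧ IsTNI T ∧
      (∀ x, ρ x ≤ T ((2 : ℂ) ^ k • 1)) ∧ ∀ y, T 1 ≤ σ y := by
  set d : ℝ := (Fintype.card n : ℝ)
  have hd : 0 < d := by simp [d, Fintype.card_pos]
  set b := min m (1 / d)
  have hb : 0 < b := lt_min hm (by positivity)
  obtain ⟨k, hk⟩ := pow_unbounded_of_one_lt (M / b) one_lt_two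
  have hT (r : ℝ) : replacementMap (algebraMap ℝ (Matrix n n ℂ) b)
      (algebraMap ℝ (Matrix (Fin 1) (Fin 1) ℂ) r) = algebraMap ℝ _ (r * b) := by
    simpa using replacementMap_algebraMap (n := Fin 1) (m := n) b r
  refine ⟨k, replacementMap (algebraMap ℝ _ b), isCP_replacementMap ?_, isTNI_replacementMap ?_,
    fun x => (hρ x).trans ?_, fun y => le_trans ?_ (hσ y)⟩
  · exact nonneg_iff_posSemidef.1 (algebraMap_nonneg _ hb.le)
  · rw [trace_algebraMap]
    exact_mod_cast (le_div_iff₀ hd).1 (min_le_right _ _)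
  · rw [← map_one (algebraMap ℝ (Matrix (Fin 1) (Fin 1) ℂ)), two_pow_smul_algebraMap, hT,
      mul_one]
    exact algebraMap_mono _ ((div_le_iff₀ hb).1 hk.le)
  · rw [← map_one (algebraMap ℝ (Matrix (Fin 1) (Fin 1) ℂ)), hT, one_mul]
    exact algebraMap_mono _ (min_le_left _ _)

lemma exists_one_le_two_pow_smul_of_loewner_bounds {X Y : Type*} [Fintype n] [DecidableEq n]
    [Nonempty n] (ρ : X → Matrix n n ℂ) (σ : Y → Matrix n n ℂ) {m M : ℝ} (hm : 0 < m)
    (hρ : ∀ x, algebraMap ℝ _ m ≤ ρ x) (hσ : ∀ y, σ y ≤ algebraMap ℝ _ M) :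
    ∃ k : ℕ, ∃ T : Matrix n n ℂ →ₗ[ℂ] Matrix (Fin 1) (Fin 1) ℂ, IsCP T ∧ IsTNI T ∧
      (∀ x, 1 ≤ T ((2 : ℂ) ^ k • ρ x)) ∧ ∀ y, T (σ y) ≤ 1 := by
  set d : ℝ := (Fintype.card n : ℝ)
  have hd : 0 < d := by simp [d, Fintype.card_pos]
  set b := (max 1 (M * d))⁻¹
  have hb : 0 < b := by positivity
  have hB : (algebraMap ℝ (Matrix (Fin 1) (Fin 1) ℂ) b).PosSemidef :=
    nonneg_iff_posSemidef.1 (algebraMap_nonneg _ hb.le)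
  have hT (r : ℝ) : replacementMap (n := n) (algebraMap ℝ (Matrix (Fin 1) (Fin 1) ℂ) b)
      (algebraMap ℝ _ r) = algebraMap ℝ _ (r * d * b) :=
    replacementMap_algebraMap b r
  obtain ⟨k, hk⟩ := pow_unbounded_of_one_lt (m * d * b)⁻¹ one_lt_two
  refine ⟨k, replacementMap (algebraMap ℝ _ b), isCP_replacementMap hB,
    isTNI_replacementMap ?_, fun x => ?_, fun y => ?_⟩
  · rw [trace_algebraMap, Fintype.card_fin, Nat.cast_one, mul_one]
    exact_mod_cast inv_le_one_of_one_le₀ (le_max_left _ _)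
  · calc (1 : Matrix (Fin 1) (Fin 1) ℂ) = algebraMap ℝ _ 1 := (map_one _).symm
      _ ≤ algebraMap ℝ _ (2 ^ k * m * d * b) := by
        refine algebraMap_mono _ ?_
        calc (1 : ℝ) ≤ 2 ^ k * (m * d * b) := ((inv_lt_iff_one_lt_mul₀ (by positivity)).1 hk).le
          _ = 2 ^ k * m * d * b := by ring
      _ = replacementMap (algebraMap ℝ _ b) ((2 : ℂ) ^ k • algebraMap ℝ _ m) := by
        rw [two_pow_smul_algebraMap, hT, mul_assoc, mul_assoc]
      _ ≤ replacementMap (algebraMap ℝ _ b) ((2 : ℂ) ^ k • ρ x) :=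
        replacementMap_mono hB (smul_le_smul_of_nonneg_left (hρ x) (by norm_num))
  · calc replacementMap (algebraMap ℝ _ b) (σ y)
          ≤ replacementMap (algebraMap ℝ _ b) (algebraMap ℝ _ M) := replacementMap_mono hB (hσ y)
      _ = algebraMap ℝ _ (M * d * b) := hT M
      _ ≤ algebraMap ℝ _ 1 :=
        algebraMap_mono _ (mul_inv_le_one_of_le₀ (le_max_right _ _) (by positivity))
      _ = 1 := map_one _

-- `blockMap LinearMap.id k A` is `A` up to η-expansion of the index pairs.
lemma isCP_id [Fintype n] : IsCP (LinearMap.id : Matrix n n ℂ →ₗ[ℂ] Matrix n n ℂ) :=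
  fun _ _ hA => hA

lemma exists_one_le_two_smul_one :
    ∃ T : Matrix (Fin 1) (Fin 1) ℂ →ₗ[ℂ] Matrix (Fin 1) (Fin 1) ℂ,
      IsCP T ∧ IsTNI T ∧ 1 ≤ T ((2 : ℂ) • 1) ∧ T 1 ≤ 1 := by
  refine ⟨LinearMap.id, isCP_id, fun _ _ => le_rfl, ?_, le_rfl⟩
  rw [LinearMap.id_apply, two_smul]
  exact le_add_of_nonneg_right zero_le_one

/-- Scalars are modelled as `1 × 1` matrices, and `u ^ k ⋅ (ρ, σ)` is identified with
`(2 ^ k • ρ, σ)`. -/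
theorem pair_two_one_power_universal_general
    {X Y : Type*} [TopologicalSpace X] [TopologicalSpace Y]
    [CompactSpace X] [CompactSpace Y]
    {n : Type*} [Fintype n] [DecidableEq n] [Nonempty n]
    (ρ : X → Matrix n n ℂ) (σ : Y → Matrix n n ℂ)
    (hρc : Continuous ρ) (hσc : Continuous σ)
    (hρ : ∀ x, (ρ x).PosDef) (hσ : ∀ y, (σ y).PosDef) :
    (∃ T : Matrix (Fin 1) (Fin 1) ℂ →ₗ[ℂ] Matrix (Fin 1) (Fin 1) ℂ,
        IsCP T ∧ IsTNI T ∧ loewner 1 (T ((2 : ℂ) • 1)) ∧ loewner (T 1) 1) ∧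
    (∃ k : ℕ, ∃ T : Matrix (Fin 1) (Fin 1) ℂ →ₗ[ℂ] Matrix n n ℂ,
        IsCP T ∧ IsTNI T ∧
        (∀ x, loewner (ρ x) (T (((2 : ℂ) ^ k) • 1))) ∧
        (∀ y, loewner (T 1) (σ y))) ∧
    (∃ k : ℕ, ∃ T : Matrix n n ℂ →ₗ[ℂ] Matrix (Fin 1) (Fin 1) ℂ,
        IsCP T ∧ IsTNI T ∧
        (∀ x, loewner 1 (T (((2 : ℂ) ^ k) • ρ x))) ∧
        (∀ y, loewner (T (σ y)) 1)) := by
  simp only [loewner_iff_le]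
  obtain ⟨mρ, hmρ, hρ_ge⟩ := exists_pos_algebraMap_le hρc hρ
  obtain ⟨Mρ, hρ_le⟩ := exists_forall_le_algebraMap hρc fun x => (hρ x).isHermitian
  obtain ⟨mσ, hmσ, hσ_ge⟩ := exists_pos_algebraMap_le hσc hσ
  obtain ⟨Mσ, hσ_le⟩ := exists_forall_le_algebraMap hσc fun y => (hσ y).isHermitian
  exact ⟨exists_one_le_two_smul_one,
    exists_le_two_pow_of_loewner_bounds ρ σ hmσ hρ_le hσ_ge,
    exists_one_le_two_pow_smul_of_loewner_bounds ρ σ hmρ hρ_ge hσ_le⟩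

/-- **The pair `u = (2·1_X, 1_Y)` of constant scalar families on `ℂ` is power universal**
in the semiring of pairs of continuous families of positive definite operators over
nonempty compact Hausdorff spaces `X, Y` under relative submajorization.  Scalars are
modelled as `1 × 1` matrices, and `u ^ k ⋅ (ρ, σ)` is identified with `(2 ^ k • ρ, σ)`.
The three claims are: `u ≽ 1`; for every nonzero pair `(ρ,σ)` there is `k` with
`(ρ,σ) ≼ u ^ k`; and `1 ≼ u ^ k ⋅ (ρ,σ)` — each inequality witnessed by a completely
positive trace-nonincreasing map acting as required pointwise on the families. -/
theorem pair_two_one_power_universal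
    {X Y : Type*} [TopologicalSpace X] [TopologicalSpace Y]
    [CompactSpace X] [CompactSpace Y] [Nonempty X] [Nonempty Y] [T2Space X] [T2Space Y]
    {n : Type*} [Fintype n] [DecidableEq n] [Nonempty n]
    (ρ : X → Matrix n n ℂ) (σ : Y → Matrix n n ℂ)
    (hρc : Continuous ρ) (hσc : Continuous σ)
    (hρ : ∀ x, (ρ x).PosDef) (hσ : ∀ y, (σ y).PosDef) :
    (∃ T : Matrix (Fin 1) (Fin 1) ℂ →ₗ[ℂ] Matrix (Fin 1) (Fin 1) ℂ,
        IsCP T ∧ IsTNI T ∧ loewner 1 (T ((2 : ℂ) • 1)) ∧ loewner (T 1) 1) ∧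
    (∃ k : ℕ, ∃ T : Matrix (Fin 1) (Fin 1) ℂ →ₗ[ℂ] Matrix n n ℂ,
        IsCP T ∧ IsTNI T ∧
        (∀ x, loewner (ρ x) (T (((2 : ℂ) ^ k) • 1))) ∧
        (∀ y, loewner (T 1) (σ y))) ∧
    (∃ k : ℕ, ∃ T : Matrix n n ℂ →ₗ[ℂ] Matrix (Fin 1) (Fin 1) ℂ,
        IsCP T ∧ IsTNI T ∧
        (∀ x, loewner 1 (T (((2 : ℂ) ^ k) • ρ x))) ∧
        (∀ y, loewner (T (σ y)) 1)) :=
  pair_two_one_power_universal_general ρ σ hρc hσc hρ hσ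
end

section
/- Let X, Y be compact Hausdorff spaces, μ, ν Radon measures with μ(X) = α ≥ 1 and ν(Y) = α − 1, and suppose μ is a point mass at x ∈ X. Then the function f(p,q) = exp(∫_X ln p dμ − ∫_Y ln q dν) = p(x)^α · exp((1−α)∫_Y ln q dγ) (where γ = ν/ν(Y) when α > 1) defined on pairs of strictly positive continuous functions p ∈ C(X,ℝ_{>0}), q ∈ C(Y,ℝ_{>0}) is jointly convex. -/
/-!
Write `G(q) = exp ∫ ln q dγ` for the geometric mean, so that `f(p,q) = p(x)^α G(q)^(1-α)`.
Jensen's inequality gives `G(q) ≤ (∫ q/m dγ) G(m)` for every positive `m`; taking `m` to be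
the convex combination `λq + (1-λ)q'` shows that `G` is concave. As `1 - α ≤ 0`, the value of
`f` at `(λp + (1-λ)p', λq + (1-λ)q')` is therefore at most `g(λa + (1-λ)a', λb + (1-λ)b')` with
`a = p(x)`, `b = G(q)` (and primes), where `g(a,b) = a^α b^(1-α) = b (a/b)^α` is the
perspective of the convex function `t ↦ t^α`, hence jointly convex.
-/

open MeasureTheory Real

lemma mul_add_one_sub_mul_pos {lam a b : ℝ} (hl0 : 0 ≤ lam) (hl1 : lam ≤ 1)
    (ha : 0 < a) (hb : 0 < b) : 0 < lam * a + (1 - lam) * b := by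
  rcases hl0.eq_or_lt with rfl | hl
  · simpa using hb
  · exact add_pos_of_pos_of_nonneg (mul_pos hl ha) (mul_nonneg (by linarith) hb.le)

lemma ConvexOn.perspective_le {s : Set ℝ} {f : ℝ → ℝ} (hf : ConvexOn ℝ s f)
    {lam a₁ a₂ b₁ b₂ : ℝ} (hl0 : 0 ≤ lam) (hl1 : lam ≤ 1) (hb₁ : 0 < b₁) (hb₂ : 0 < b₂)
    (hs₁ : a₁ / b₁ ∈ s) (hs₂ : a₂ / b₂ ∈ s) :
    (lam * b₁ + (1 - lam) * b₂) * f ((lam * a₁ + (1 - lam) * a₂) / (lam * b₁ + (1 - lam) * b₂))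
      ≤ lam * (b₁ * f (a₁ / b₁)) + (1 - lam) * (b₂ * f (a₂ / b₂)) := by
  set B := lam * b₁ + (1 - lam) * b₂
  have hB : 0 < B := mul_add_one_sub_mul_pos hl0 hl1 hb₁ hb₂
  have hweights : lam * b₁ / B + (1 - lam) * b₂ / B = 1 := by
    rw [← add_div, div_self hB.ne']
  have hpoint : lam * b₁ / B * (a₁ / b₁) + (1 - lam) * b₂ / B * (a₂ / b₂)
      = (lam * a₁ + (1 - lam) * a₂) / B := by
    field_simp
  have hconv := hf.2 hs₁ hs₂ (by positivity) (div_nonneg (mul_nonneg (by linarith) hb₂.le) hB.le)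
    hweights
  simp only [smul_eq_mul, hpoint] at hconv
  calc B * f ((lam * a₁ + (1 - lam) * a₂) / B)
      ≤ B * (lam * b₁ / B * f (a₁ / b₁) + (1 - lam) * b₂ / B * f (a₂ / b₂)) := by gcongr
    _ = lam * (b₁ * f (a₁ / b₁)) + (1 - lam) * (b₂ * f (a₂ / b₂)) := by
      field_simp

lemma mul_rpow_div_eq_rpow_mul_rpow_one_sub {a b : ℝ} (ha : 0 ≤ a) (hb : 0 < b) (α : ℝ) :
    b * (a / b) ^ α = a ^ α * b ^ (1 - α) := by
  rw [div_rpow ha hb.le, rpow_sub hb, rpow_one]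
  field_simp

lemma rpow_mul_rpow_one_sub_le {α : ℝ} (hα : 1 ≤ α) {lam a₁ a₂ b₁ b₂ : ℝ}
    (hl0 : 0 ≤ lam) (hl1 : lam ≤ 1) (ha₁ : 0 < a₁) (ha₂ : 0 < a₂)
    (hb₁ : 0 < b₁) (hb₂ : 0 < b₂) :
    (lam * a₁ + (1 - lam) * a₂) ^ α * (lam * b₁ + (1 - lam) * b₂) ^ (1 - α)
      ≤ lam * (a₁ ^ α * b₁ ^ (1 - α)) + (1 - lam) * (a₂ ^ α * b₂ ^ (1 - α)) := by
  have h := (convexOn_rpow hα).perspective_le hl0 hl1 hb₁ hb₂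
    (div_pos ha₁ hb₁).le (div_pos ha₂ hb₂).le
  rwa [mul_rpow_div_eq_rpow_mul_rpow_one_sub (mul_add_one_sub_mul_pos hl0 hl1 ha₁ ha₂).le
      (mul_add_one_sub_mul_pos hl0 hl1 hb₁ hb₂),
    mul_rpow_div_eq_rpow_mul_rpow_one_sub ha₁.le hb₁,
    mul_rpow_div_eq_rpow_mul_rpow_one_sub ha₂.le hb₂] at h

section GeomMean

variable {Y : Type*} [MeasurableSpace Y] (γ : Measure Y)

noncomputable def geomMean (q : Y → ℝ) : ℝ := exp (∫ y, log (q y) ∂γ)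

lemma geomMean_pos (q : Y → ℝ) : 0 < geomMean γ q := exp_pos _

variable [TopologicalSpace Y] [CompactSpace Y] [OpensMeasurableSpace Y]

lemma geomMean_div [IsFiniteMeasure γ] {u m : Y → ℝ} (hu : Continuous u) (hm : Continuous m)
    (hu₀ : ∀ y, 0 < u y) (hm₀ : ∀ y, 0 < m y) :
    geomMean γ (fun y ↦ u y / m y) = geomMean γ u / geomMean γ m := by
  have hlog (g : Y → ℝ) (hg : Continuous g) (hg₀ : ∀ y, 0 < g y) :
      Integrable (fun y ↦ log (g y)) γ :=
    (hg.log fun y ↦ (hg₀ y).ne').integrable_of_hasCompactSupport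
      (HasCompactSupport.of_compactSpace _)
  simp only [geomMean, log_div (hu₀ _).ne' (hm₀ _).ne',
    integral_sub (hlog u hu hu₀) (hlog m hm hm₀), exp_sub]

variable [IsProbabilityMeasure γ]

lemma geomMean_le_integral {g : Y → ℝ} (hg : Continuous g) (hg₀ : ∀ y, 0 < g y) :
    geomMean γ g ≤ ∫ y, g y ∂γ := by
  have hlog : Continuous fun y ↦ log (g y) := hg.log fun y ↦ (hg₀ y).ne'
  calc exp (∫ y, log (g y) ∂γ)
      ≤ ∫ y, exp (log (g y)) ∂γ :=
        convexOn_exp.map_integral_le continuous_exp.continuousOn isClosed_univ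
          (.of_forall fun _ ↦ trivial)
          (hlog.integrable_of_hasCompactSupport (.of_compactSpace _))
          ((continuous_exp.comp hlog).integrable_of_hasCompactSupport (.of_compactSpace _))
    _ = ∫ y, g y ∂γ := by simp only [exp_log (hg₀ _)]

lemma geomMean_le_integral_div_mul {u m : Y → ℝ} (hu : Continuous u) (hm : Continuous m)
    (hu₀ : ∀ y, 0 < u y) (hm₀ : ∀ y, 0 < m y) :
    geomMean γ u ≤ (∫ y, u y / m y ∂γ) * geomMean γ m := by
  have h := geomMean_le_integral γ (g := fun y ↦ u y / m y) (hu.div hm fun y ↦ (hm₀ y).ne')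
    fun y ↦ div_pos (hu₀ y) (hm₀ y)
  rwa [geomMean_div γ hu hm hu₀ hm₀, div_le_iff₀ (geomMean_pos γ m)] at h

lemma geomMean_concave {lam : ℝ} (hl0 : 0 ≤ lam) (hl1 : lam ≤ 1)
    {q q' : Y → ℝ} (hq : Continuous q) (hq' : Continuous q')
    (hq₀ : ∀ y, 0 < q y) (hq'₀ : ∀ y, 0 < q' y) :
    lam * geomMean γ q + (1 - lam) * geomMean γ q'
      ≤ geomMean γ (fun y ↦ lam * q y + (1 - lam) * q' y) := by
  set m : Y → ℝ := fun y ↦ lam * q y + (1 - lam) * q' y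
  have hm : Continuous m := by fun_prop
  have hm₀ (y : Y) : 0 < m y := mul_add_one_sub_mul_pos hl0 hl1 (hq₀ y) (hq'₀ y)
  have hint (u : Y → ℝ) (hu : Continuous u) : Integrable (fun y ↦ u y / m y) γ :=
    (hu.div hm fun y ↦ (hm₀ y).ne').integrable_of_hasCompactSupport (.of_compactSpace _)
  have hsum : lam * (∫ y, q y / m y ∂γ) + (1 - lam) * ∫ y, q' y / m y ∂γ = 1 := by
    rw [← integral_const_mul, ← integral_const_mul,
      ← integral_add ((hint q hq).const_mul _) ((hint q' hq').const_mul _)]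
    simp only [mul_div_assoc', ← add_div, div_self (hm₀ _).ne', integral_const, probReal_univ,
      smul_eq_mul, mul_one, m]
  calc lam * geomMean γ q + (1 - lam) * geomMean γ q'
      ≤ lam * ((∫ y, q y / m y ∂γ) * geomMean γ m)
        + (1 - lam) * ((∫ y, q' y / m y ∂γ) * geomMean γ m) :=
        add_le_add (mul_le_mul_of_nonneg_left (geomMean_le_integral_div_mul γ hq hm hq₀ hm₀) hl0)
          (mul_le_mul_of_nonneg_left (geomMean_le_integral_div_mul γ hq' hm hq'₀ hm₀)
            (by linarith))
    _ = geomMean γ m := by linear_combination geomMean γ m * hsum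

end GeomMean

theorem classical_spectral_point_jointly_convex_general
    {X Y : Type*} [TopologicalSpace X]
    [TopologicalSpace Y] [CompactSpace Y]
    [MeasurableSpace X] [BorelSpace X] [MeasurableSpace Y] [BorelSpace Y]
    (γ : Measure Y) [IsProbabilityMeasure γ]
    (α : ℝ) (hα : 1 ≤ α) (x : X) :
    (∀ p : X → ℝ, ∀ q : Y → ℝ, Continuous p → Continuous q →
      (∀ x', 0 < p x') → (∀ y, 0 < q y) →
      p x ^ α * Real.exp ((1 - α) * ∫ y, Real.log (q y) ∂γ)
        = Real.exp ((∫ x', Real.log (p x') ∂((ENNReal.ofReal α) • Measure.dirac x))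
            - ∫ y, Real.log (q y) ∂((ENNReal.ofReal (α - 1)) • γ))) ∧
    (∀ lam : ℝ, 0 ≤ lam → lam ≤ 1 →
      ∀ p p' : X → ℝ, ∀ q q' : Y → ℝ,
      Continuous p → Continuous p' → Continuous q → Continuous q' →
      (∀ x', 0 < p x') → (∀ x', 0 < p' x') → (∀ y, 0 < q y) → (∀ y, 0 < q' y) →
      (lam * p x + (1 - lam) * p' x) ^ α
          * Real.exp ((1 - α) * ∫ y, Real.log (lam * q y + (1 - lam) * q' y) ∂γ)
        ≤ lam * (p x ^ α * Real.exp ((1 - α) * ∫ y, Real.log (q y) ∂γ))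
          + (1 - lam) * (p' x ^ α * Real.exp ((1 - α) * ∫ y, Real.log (q' y) ∂γ))) := by
  refine ⟨fun p q hp _ hp₀ _ ↦ ?_, fun lam hl0 hl1 p p' q q' _ _ hq hq' hp₀ hp'₀ hq₀ hq'₀ ↦ ?_⟩
  · rw [integral_smul_measure, integral_smul_measure,
      integral_dirac' _ _ (hp.log fun x' ↦ (hp₀ x').ne').stronglyMeasurable,
      ENNReal.toReal_ofReal (by linarith), ENNReal.toReal_ofReal (by linarith),
      smul_eq_mul, smul_eq_mul, rpow_def_of_pos (hp₀ x), ← exp_add]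
    ring_nf
  · have hG (r : Y → ℝ) : exp ((1 - α) * ∫ y, log (r y) ∂γ) = geomMean γ r ^ (1 - α) := by
      rw [geomMean, mul_comm, exp_mul]
    simp only [hG]
    calc (lam * p x + (1 - lam) * p' x) ^ α
          * geomMean γ (fun y ↦ lam * q y + (1 - lam) * q' y) ^ (1 - α)
        ≤ (lam * p x + (1 - lam) * p' x) ^ α
          * (lam * geomMean γ q + (1 - lam) * geomMean γ q') ^ (1 - α) :=
          mul_le_mul_of_nonneg_left
            (rpow_le_rpow_of_nonpos
              (mul_add_one_sub_mul_pos hl0 hl1 (geomMean_pos γ q) (geomMean_pos γ q'))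
              (geomMean_concave γ hl0 hl1 hq hq' hq₀ hq'₀) (by linarith))
            (rpow_nonneg (mul_add_one_sub_mul_pos hl0 hl1 (hp₀ x) (hp'₀ x)).le _)
      _ ≤ _ := rpow_mul_rpow_one_sub_le hα hl0 hl1 (hp₀ x) (hp'₀ x)
        (geomMean_pos γ q) (geomMean_pos γ q')

/-- **Joint convexity of the classical spectral-point functionals.**
Let `X, Y` be compact Hausdorff spaces, `x ∈ X`, `α ≥ 1`, and `γ` a Radon probability
measure on `Y`.  The function `f(p,q) = p(x)^α · exp((1−α) ∫_Y ln q dγ)`, which equals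
`exp(∫_X ln p dμ − ∫_Y ln q dν)` for `μ = α·δ_x` and `ν = (α−1)·γ`, is jointly convex
on pairs of strictly positive continuous functions. -/
theorem classical_spectral_point_jointly_convex
    {X Y : Type*} [TopologicalSpace X] [CompactSpace X] [T2Space X]
    [TopologicalSpace Y] [CompactSpace Y] [T2Space Y]
    [MeasurableSpace X] [BorelSpace X] [MeasurableSpace Y] [BorelSpace Y]
    (γ : Measure Y) [IsProbabilityMeasure γ] [γ.Regular]
    (α : ℝ) (hα : 1 ≤ α) (x : X) :
    (∀ p : X → ℝ, ∀ q : Y → ℝ, Continuous p → Continuous q →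
      (∀ x', 0 < p x') → (∀ y, 0 < q y) →
      p x ^ α * Real.exp ((1 - α) * ∫ y, Real.log (q y) ∂γ)
        = Real.exp ((∫ x', Real.log (p x') ∂((ENNReal.ofReal α) • Measure.dirac x))
            - ∫ y, Real.log (q y) ∂((ENNReal.ofReal (α - 1)) • γ))) ∧
    (∀ lam : ℝ, 0 ≤ lam → lam ≤ 1 →
      ∀ p p' : X → ℝ, ∀ q q' : Y → ℝ,
      Continuous p → Continuous p' → Continuous q → Continuous q' →
      (∀ x', 0 < p x') → (∀ x', 0 < p' x') → (∀ y, 0 < q y) → (∀ y, 0 < q' y) →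
      (lam * p x + (1 - lam) * p' x) ^ α
          * Real.exp ((1 - α) * ∫ y, Real.log (lam * q y + (1 - lam) * q' y) ∂γ)
        ≤ lam * (p x ^ α * Real.exp ((1 - α) * ∫ y, Real.log (q y) ∂γ))
          + (1 - lam) * (p' x ^ α * Real.exp ((1 - α) * ∫ y, Real.log (q' y) ∂γ))) :=
  classical_spectral_point_jointly_convex_general γ α hα x
end

section
/- On scalars (H = ℂ), every family of continuous geometric means M ∈ GMeans(Y) has the form M(σ) = exp(∫_Y ln σ dγ) for a unique Radon probability measure γ on Y. -/
/-!
Multiplicativity, monotonicity and homogeneity of `M` make `Λ ξ = log M(exp ξ)` an additive,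
monotone functional on `C(Y, ℝ)` with `Λ (ξ + c) = Λ ξ + c` for constants `c`. Squeezing `ξ`
between the constants `± ‖ξ‖` shows `|Λ ξ| ≤ ‖ξ‖`, so `Λ` is continuous, hence `ℝ`-linear, and
therefore a positive linear functional with `Λ 1 = 1`. The Riesz–Markov–Kakutani theorem
represents it by a unique regular probability measure `γ`, and exponentiating
`Λ (log σ) = ∫ log σ dγ` gives `M σ = exp (∫ log σ dγ)`.
-/

open MeasureTheory CompactlySupported

namespace AddMonoidHom

variable {Y : Type*} [TopologicalSpace Y] [CompactSpace Y] {Λ : C(Y, ℝ) →+ ℝ}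

lemma norm_apply_le_of_monotone_of_map_const (hmono : Monotone Λ)
    (hconst : ∀ c, Λ (.const Y c) = c) (f : C(Y, ℝ)) : ‖Λ f‖ ≤ ‖f‖ := by
  have hbound (y : Y) : |f y| ≤ ‖f‖ := f.norm_coe_le_norm y
  have hlower : ContinuousMap.const Y (-‖f‖) ≤ f := fun y => neg_le_of_abs_le (hbound y)
  have hupper : f ≤ ContinuousMap.const Y ‖f‖ := fun y => le_of_abs_le (hbound y)
  rw [Real.norm_eq_abs, abs_le]
  exact ⟨(hconst _).symm.le.trans (hmono hlower), (hmono hupper).trans (hconst _).le⟩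

lemma continuous_of_monotone_of_map_const (hmono : Monotone Λ)
    (hconst : ∀ c, Λ (.const Y c) = c) : Continuous Λ :=
  AddMonoidHomClass.continuous_of_bound Λ 1 fun f => by
    simpa using norm_apply_le_of_monotone_of_map_const hmono hconst f

variable [T2Space Y] [MeasurableSpace Y] [BorelSpace Y]

theorem exists_isProbabilityMeasure_regular_integral_eq (hmono : Monotone Λ)
    (hconst : ∀ c, Λ (.const Y c) = c) :
    ∃ γ : Measure Y, IsProbabilityMeasure γ ∧ γ.Regular ∧ ∀ f : C(Y, ℝ), ∫ y, f y ∂γ = Λ f := by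
  let Φ : C_c(Y, ℝ) →ₚ[ℝ] ℝ :=
    { toFun f := Λ f.toContinuousMap
      map_add' f g := Λ.map_add _ _
      map_smul' c f := map_real_smul Λ (continuous_of_monotone_of_map_const hmono hconst) c _
      monotone' f g hfg := hmono hfg }
  have hΦ (f : C(Y, ℝ)) : ∫ y, f y ∂(RealRMK.rieszMeasure Φ) = Λ f :=
    RealRMK.integral_rieszMeasure Φ (CompactlySupportedContinuousMap.continuousMapEquiv f)
  refine ⟨RealRMK.rieszMeasure Φ, isProbabilityMeasure_iff_real.mpr ?_, inferInstance, hΦ⟩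
  simpa using (hΦ (.const Y 1)).trans (hconst 1)

end AddMonoidHom

section LogMean

variable {Y : Type*} [TopologicalSpace Y] (M : (Y → ℝ) → ℝ)

noncomputable def logMean (ξ : C(Y, ℝ)) : ℝ := Real.log (M fun y => Real.exp (ξ y))

variable (hpos : ∀ σ : Y → ℝ, Continuous σ → (∀ y, 0 < σ y) → 0 < M σ)
include hpos

lemma exp_logMean (ξ : C(Y, ℝ)) : Real.exp (logMean M ξ) = M fun y => Real.exp (ξ y) :=
  Real.exp_log (hpos _ (by fun_prop) fun y => Real.exp_pos _)

lemma logMean_add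
    (hmul : ∀ σ σ' : Y → ℝ, Continuous σ → Continuous σ' →
      (∀ y, 0 < σ y) → (∀ y, 0 < σ' y) → M (fun y => σ y * σ' y) = M σ * M σ')
    (f g : C(Y, ℝ)) : logMean M (f + g) = logMean M f + logMean M g := by
  apply Real.exp_injective
  simp only [Real.exp_add, exp_logMean M hpos, ContinuousMap.add_apply]
  exact hmul _ _ (by fun_prop) (by fun_prop) (fun y => Real.exp_pos _) fun y => Real.exp_pos _

lemma logMean_add_const
    (hsmul : ∀ (lam : ℝ), 0 < lam → ∀ σ : Y → ℝ, Continuous σ → (∀ y, 0 < σ y) →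
      M (fun y => lam * σ y) = lam * M σ)
    (f : C(Y, ℝ)) (c : ℝ) : logMean M (f + .const Y c) = logMean M f + c := by
  apply Real.exp_injective
  simp only [Real.exp_add, exp_logMean M hpos, ContinuousMap.add_apply,
    ContinuousMap.const_apply, mul_comm _ (Real.exp c)]
  exact hsmul _ (Real.exp_pos c) _ (by fun_prop) fun y => Real.exp_pos _

lemma monotone_logMean
    (hmono : ∀ σ σ' : Y → ℝ, Continuous σ → Continuous σ' →
      (∀ y, 0 < σ y) → (∀ y, 0 < σ' y) → (∀ y, σ y ≤ σ' y) → M σ ≤ M σ') :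
    Monotone (logMean M) := fun f g hfg => by
  rw [← Real.exp_le_exp, exp_logMean M hpos, exp_logMean M hpos]
  exact hmono _ _ (by fun_prop) (by fun_prop) (fun y => Real.exp_pos _) (fun y => Real.exp_pos _)
    fun y => Real.exp_le_exp.mpr (hfg y)

lemma eq_exp_integral_log_iff [MeasurableSpace Y] (ν : Measure Y) :
    (∀ σ : Y → ℝ, Continuous σ → (∀ y, 0 < σ y) → M σ = Real.exp (∫ y, Real.log (σ y) ∂ν)) ↔
      ∀ ξ : C(Y, ℝ), ∫ y, ξ y ∂ν = logMean M ξ := by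
  constructor
  · intro h ξ
    apply Real.exp_injective
    simpa [exp_logMean M hpos] using (h _ (by fun_prop) fun y => Real.exp_pos _).symm
  · intro h σ hσ hσpos
    have hlog : Continuous fun y => Real.log (σ y) := hσ.log fun y => (hσpos y).ne'
    have hξ := h ⟨_, hlog⟩
    rw [ContinuousMap.coe_mk] at hξ
    rw [hξ, exp_logMean M hpos]
    simp [Real.exp_log (hσpos _)]

end LogMean

theorem scalar_gmeans_classification_general
    {Y : Type*} [TopologicalSpace Y] [CompactSpace Y] [T2Space Y]
    [MeasurableSpace Y] [BorelSpace Y]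
    (M : (Y → ℝ) → ℝ)
    (hpos : ∀ σ : Y → ℝ, Continuous σ → (∀ y, 0 < σ y) → 0 < M σ)
    (hmul : ∀ σ σ' : Y → ℝ, Continuous σ → Continuous σ' →
      (∀ y, 0 < σ y) → (∀ y, 0 < σ' y) → M (fun y => σ y * σ' y) = M σ * M σ')
    (hsmul : ∀ (lam : ℝ), 0 < lam → ∀ σ : Y → ℝ, Continuous σ → (∀ y, 0 < σ y) →
      M (fun y => lam * σ y) = lam * M σ)
    (hmono : ∀ σ σ' : Y → ℝ, Continuous σ → Continuous σ' →
      (∀ y, 0 < σ y) → (∀ y, 0 < σ' y) → (∀ y, σ y ≤ σ' y) → M σ ≤ M σ') :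
    ∃ γ : Measure Y, (IsProbabilityMeasure γ ∧ γ.Regular ∧
        ∀ σ : Y → ℝ, Continuous σ → (∀ y, 0 < σ y) →
          M σ = Real.exp (∫ y, Real.log (σ y) ∂γ)) ∧
      ∀ γ' : Measure Y, (IsProbabilityMeasure γ' ∧ γ'.Regular ∧
        ∀ σ : Y → ℝ, Continuous σ → (∀ y, 0 < σ y) →
          M σ = Real.exp (∫ y, Real.log (σ y) ∂γ')) → γ' = γ := by
  let Λ : C(Y, ℝ) →+ ℝ := AddMonoidHom.mk' (logMean M) (logMean_add M hpos hmul)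
  have hconst (c : ℝ) : Λ (.const Y c) = c := by
    have h := logMean_add_const M hpos hsmul 0 c
    rwa [zero_add, show logMean M 0 = Λ 0 from rfl, map_zero, zero_add] at h
  obtain ⟨γ, hγ, hreg, hγΛ⟩ :=
    Λ.exists_isProbabilityMeasure_regular_integral_eq (monotone_logMean M hpos hmono) hconst
  refine ⟨γ, ⟨hγ, hreg, (eq_exp_integral_log_iff M hpos γ).2 hγΛ⟩, ?_⟩
  rintro γ' ⟨-, hreg', hγ'⟩
  exact Measure.ext_of_integral_eq_on_compactlySupported fun f =>
    ((eq_exp_integral_log_iff M hpos γ').1 hγ' f.toContinuousMap).trans (hγΛ _).symm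

/-- **Classification of scalar geometric means.** Let `Y` be a nonempty compact Hausdorff
space and let `M` assign a positive real to every strictly positive continuous function on
`Y`, such that `M` is multiplicative, positively homogeneous, monotone and concave (on
strictly positive continuous functions). Then there is a unique Radon probability measure
`γ` on `Y` with `M(σ) = exp(∫_Y ln σ dγ)` for all strictly positive continuous `σ`. -/
theorem scalar_gmeans_classification
    {Y : Type*} [TopologicalSpace Y] [CompactSpace Y] [T2Space Y] [Nonempty Y]
    [MeasurableSpace Y] [BorelSpace Y]
    (M : (Y → ℝ) → ℝ)
    (hpos : ∀ σ : Y → ℝ, Continuous σ → (∀ y, 0 < σ y) → 0 < M σ)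
    (hmul : ∀ σ σ' : Y → ℝ, Continuous σ → Continuous σ' →
      (∀ y, 0 < σ y) → (∀ y, 0 < σ' y) → M (fun y => σ y * σ' y) = M σ * M σ')
    (hsmul : ∀ (lam : ℝ), 0 < lam → ∀ σ : Y → ℝ, Continuous σ → (∀ y, 0 < σ y) →
      M (fun y => lam * σ y) = lam * M σ)
    (hmono : ∀ σ σ' : Y → ℝ, Continuous σ → Continuous σ' →
      (∀ y, 0 < σ y) → (∀ y, 0 < σ' y) → (∀ y, σ y ≤ σ' y) → M σ ≤ M σ')
    (hconc : ∀ σ σ' : Y → ℝ, Continuous σ → Continuous σ' →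
      (∀ y, 0 < σ y) → (∀ y, 0 < σ' y) → ∀ lam : ℝ, 0 ≤ lam → lam ≤ 1 →
      lam * M σ + (1 - lam) * M σ' ≤ M (fun y => lam * σ y + (1 - lam) * σ' y)) :
    ∃ γ : Measure Y, (IsProbabilityMeasure γ ∧ γ.Regular ∧
        ∀ σ : Y → ℝ, Continuous σ → (∀ y, 0 < σ y) →
          M σ = Real.exp (∫ y, Real.log (σ y) ∂γ)) ∧
      ∀ γ' : Measure Y, (IsProbabilityMeasure γ' ∧ γ'.Regular ∧
        ∀ σ : Y → ℝ, Continuous σ → (∀ y, 0 < σ y) →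
          M σ = Real.exp (∫ y, Real.log (σ y) ∂γ')) → γ' = γ :=
  scalar_gmeans_classification_general M hpos hmul hsmul hmono
end
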